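/- arXiv:1711.02428 — 2 statements merged into one kernel-verified Lean document; each statement's English description precedes it below -/
import Mathlib

section
/- (Lemma 5.1, Buser-type estimate) Assume ℓ_*(G) = inf_{e ∈ E} |e| > 0. Then the infimum over all nonzero test functions f on G of the Rayleigh quotient ‖f′‖²/‖f‖² is at most (π²/(2ℓ_*(G)))·α(G); that is, λ₀(H) ≤ π²·α(G)/(2ℓ_*(G)). -/
open scoped Classical ENNReal
open MeasureTheory

noncomputable section

/-- A real function on `[0, L]` which is continuous and piecewise continuously
differentiable: there is a finite partition `0 = x 0 < x 1 < ... < x n = L` such that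
on each closed piece the function has a continuous derivative. -/
def PiecewiseC1 (f : ℝ → ℝ) (L : ℝ) : Prop :=
  ContinuousOn f (Set.Icc 0 L) ∧
  ∃ (n : ℕ) (x : Fin (n + 1) → ℝ), x 0 = 0 ∧ x (Fin.last n) = L ∧ StrictMono x ∧
    ∀ i : Fin n, ∃ g : ℝ → ℝ,
      ContinuousOn g (Set.Icc (x i.castSucc) (x i.succ)) ∧
      ∀ t ∈ Set.Icc (x i.castSucc) (x i.succ),
        HasDerivWithinAt f (g t) (Set.Icc (x i.castSucc) (x i.succ)) t

/-- The underlying (unoriented) simple graph of a set of edges `E` with endpoint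
map `ends : E → V × V`. -/
def graphOf {V E : Type} (ends : E → V × V) : SimpleGraph V :=
  SimpleGraph.fromRel fun u v => ∃ e, ends e = (u, v)

/-- A metric graph: a connected, locally finite, simple combinatorial graph with
countably infinite vertex and edge sets, each edge having a finite positive length.
Each edge carries an (auxiliary) orientation given by `ends`. -/
structure MetricGraph : Type 1 where
  V : Type
  E : Type
  countV : Countable V
  infV : Infinite V
  countE : Countable E
  infE : Infinite E
  ends : E → V × V
  len : E → ℝ
  len_pos : ∀ e, 0 < len e
  no_loops : ∀ e, (ends e).1 ≠ (ends e).2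
  no_multi : Function.Injective fun e => Sym2.mk (ends e)
  locfin : ∀ v, {e | (ends e).1 = v ∨ (ends e).2 = v}.Finite
  conn : (graphOf ends).Connected

namespace MetricGraph

/-- The underlying simple graph. -/
def graph (Γ : MetricGraph) : SimpleGraph Γ.V := graphOf Γ.ends

/-- The star of a vertex: the set of edges incident to it. -/
def star (Γ : MetricGraph) (v : Γ.V) : Set Γ.E :=
  {e | (Γ.ends e).1 = v ∨ (Γ.ends e).2 = v}

/-- Combinatorial degree of a vertex. -/
def degree (Γ : MetricGraph) (v : Γ.V) : ℕ := (Γ.locfin v).toFinset.card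

/-- The vertices of a (finite) subgraph given by a finite set of edges. -/
def vertsOf (Γ : MetricGraph) (F : Finset Γ.E) : Finset Γ.V :=
  F.image (fun e => (Γ.ends e).1) ∪ F.image fun e => (Γ.ends e).2

/-- The degree of a vertex inside the subgraph given by the edge set `F`. -/
def degIn (Γ : MetricGraph) (F : Finset Γ.E) (v : Γ.V) : ℕ :=
  (F.filter fun e => (Γ.ends e).1 = v ∨ (Γ.ends e).2 = v).card

/-- Connectedness of the subgraph spanned by the edge set `F`. -/
def SubConn (Γ : MetricGraph) (F : Finset Γ.E) : Prop :=
  ((SimpleGraph.fromRel fun u v => ∃ e ∈ F, Γ.ends e = (u, v)).induce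
    (↑(Γ.vertsOf F) : Set Γ.V)).Connected

/-- A finite connected subgraph (with at least one edge), given by its edge set. -/
def IsFinSubgraph (Γ : MetricGraph) (F : Finset Γ.E) : Prop :=
  F.Nonempty ∧ Γ.SubConn F

/-- The boundary of a finite subgraph with respect to `Γ`: the vertices whose degree
in the subgraph is strictly smaller than the degree in `Γ`. -/
def bdry (Γ : MetricGraph) (F : Finset Γ.E) : Finset Γ.V :=
  (Γ.vertsOf F).filter fun v => Γ.degIn F v < Γ.degree v

/-- `deg (∂_G G̃)`. -/
def degBdry (Γ : MetricGraph) (F : Finset Γ.E) : ℝ :=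
  ∑ v ∈ Γ.bdry F, (Γ.degIn F v : ℝ)

/-- The total length (Lebesgue measure) of a finite subgraph. -/
def mes (Γ : MetricGraph) (F : Finset Γ.E) : ℝ := ∑ e ∈ F, Γ.len e

/-- The isoperimetric (Cheeger) constant of a metric graph. -/
def alpha (Γ : MetricGraph) : ℝ :=
  sInf {r : ℝ | ∃ F : Finset Γ.E, Γ.IsFinSubgraph F ∧ r = Γ.degBdry F / Γ.mes F}

/-- The isoperimetric constant at infinity, as an element of `[0,∞]`. -/
def alphaEssEnn (Γ : MetricGraph) : ℝ≥0∞ :=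
  ⨆ W : Finset Γ.E, ⨅ (F : Finset Γ.E) (_ : Γ.IsFinSubgraph F ∧ Disjoint F W),
    ENNReal.ofReal (Γ.degBdry F / Γ.mes F)

/-- The vertex weight `m(v) = Σ_{e ∈ E_v} |e|`. -/
def mweight (Γ : MetricGraph) (v : Γ.V) : ℝ :=
  ∑ e ∈ (Γ.locfin v).toFinset, Γ.len e

/-- The set of boundary edges of a vertex set: edges with exactly one endpoint in `X`. -/
def Eb (Γ : MetricGraph) (X : Set Γ.V) : Set Γ.E :=
  {e | Xor' ((Γ.ends e).1 ∈ X) ((Γ.ends e).2 ∈ X)}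

/-- The discrete isoperimetric constant of a vertex set `U`. -/
def alphaD (Γ : MetricGraph) (U : Set Γ.V) : ℝ :=
  sInf {r : ℝ | ∃ X : Finset Γ.V, ↑X ⊆ U ∧ X.Nonempty ∧
    r = ((Γ.Eb ↑X).ncard : ℝ) / ∑ v ∈ X, Γ.mweight v}

/-- The discrete isoperimetric constant at infinity, as an element of `[0,∞]`. -/
def alphaDEssEnn (Γ : MetricGraph) : ℝ≥0∞ :=
  ⨆ X : Finset Γ.V, ENNReal.ofReal (Γ.alphaD (↑X : Set Γ.V)ᶜ)

/-- The combinatorial isoperimetric constant. -/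
def alphaComb (Γ : MetricGraph) : ℝ :=
  sInf {r : ℝ | ∃ X : Finset Γ.V, X.Nonempty ∧
    r = ((Γ.Eb ↑X).ncard : ℝ) / ∑ v ∈ X, (Γ.degree v : ℝ)}

/-- `ℓ*(G) = sup of edge lengths`. -/
def ellSup (Γ : MetricGraph) : ℝ := sSup (Set.range Γ.len)

/-- `ℓ_*(G) = inf of edge lengths`. -/
def ellInf (Γ : MetricGraph) : ℝ := sInf (Set.range Γ.len)

/-- `ℓ*(G)` as an element of `[0,∞]`. -/
def ellSupEnn (Γ : MetricGraph) : ℝ≥0∞ := ⨆ e : Γ.E, ENNReal.ofReal (Γ.len e)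

/-- `ℓ*_ess(G) = inf_F sup_{e ∉ F} |e|` as an element of `[0,∞]`. -/
def ellSupEssEnn (Γ : MetricGraph) : ℝ≥0∞ :=
  ⨅ W : Finset Γ.E, ⨆ e : {e : Γ.E // e ∉ W}, ENNReal.ofReal (Γ.len (e : Γ.E))

/-- Outgoing edges at a vertex (for the fixed orientation). -/
def plusE (Γ : MetricGraph) (v : Γ.V) : Set Γ.E := {e | (Γ.ends e).1 = v}

/-- Incoming edges at a vertex (for the fixed orientation). -/
def minusE (Γ : MetricGraph) (v : Γ.V) : Set Γ.E := {e | (Γ.ends e).2 = v}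

/-- The curvature `K(v) = ((#E_v⁺ − #E_v⁻)/#E_v⁺) · inf_{e ∈ E_v⁺} 1/|e|`. -/
def Kcurv (Γ : MetricGraph) (v : Γ.V) : ℝ :=
  (((Γ.plusE v).ncard : ℝ) - ((Γ.minusE v).ncard : ℝ)) / ((Γ.plusE v).ncard : ℝ) *
    sInf ((fun e => 1 / Γ.len e) '' Γ.plusE v)

/-- The combinatorial curvature `K_comb(v) = 1 − #E_v⁻/#E_v⁺`. -/
def Kcomb (Γ : MetricGraph) (v : Γ.V) : ℝ :=
  1 - ((Γ.minusE v).ncard : ℝ) / ((Γ.plusE v).ncard : ℝ)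

/-- `liminf_{v ∈ V} K(v) = sup over finite W of inf_{v ∉ W} K(v)`, in `[0,∞]`. -/
def KcurvEssEnn (Γ : MetricGraph) : ℝ≥0∞ :=
  ⨆ W : Finset Γ.V, ⨅ v : {v : Γ.V // v ∉ W}, ENNReal.ofReal (Γ.Kcurv (v : Γ.V))

/-- `liminf_{v ∈ V} K_comb(v) = sup over finite W of inf_{v ∉ W} K_comb(v)`. -/
def KcombLiminf (Γ : MetricGraph) : ℝ :=
  sSup (Set.range fun W : Finset Γ.V => sInf (Γ.Kcomb '' (↑W : Set Γ.V)ᶜ))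

/-- The value of an edgewise function at an endpoint of an edge. -/
def endVal (Γ : MetricGraph) (f : Γ.E → ℝ → ℝ) (e : Γ.E) (v : Γ.V) : ℝ :=
  if (Γ.ends e).1 = v then f e 0 else f e (Γ.len e)

/-- A test function on the metric graph `Γ`: a family of continuous, piecewise `C¹`
functions on the edges, matching at the vertices, vanishing on all but finitely
many edges. -/
structure TestFun (Γ : MetricGraph) where
  f : Γ.E → ℝ → ℝ
  piecewise : ∀ e, PiecewiseC1 (f e) (Γ.len e)
  vertexCont : ∀ e e' : Γ.E, ∀ v : Γ.V, e ∈ Γ.star v → e' ∈ Γ.star v →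
    Γ.endVal f e v = Γ.endVal f e' v
  finSupp : {e : Γ.E | ∃ x ∈ Set.Icc 0 (Γ.len e), f e x ≠ 0}.Finite

/-- `‖f‖² = Σ_e ∫₀^{|e|} f_e(x)² dx`. -/
def TestFun.normSq {Γ : MetricGraph} (φ : TestFun Γ) : ℝ :=
  ∑ᶠ e : Γ.E, ∫ x in (0:ℝ)..Γ.len e, (φ.f e x) ^ 2

/-- `‖f′‖² = Σ_e ∫₀^{|e|} f_e′(x)² dx`. -/
def TestFun.energySq {Γ : MetricGraph} (φ : TestFun Γ) : ℝ :=
  ∑ᶠ e : Γ.E, ∫ x in (0:ℝ)..Γ.len e, (deriv (φ.f e) x) ^ 2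

/-- A test function is nonzero if it does not vanish identically on the graph. -/
def TestFun.Nonzero {Γ : MetricGraph} (φ : TestFun Γ) : Prop :=
  ∃ e : Γ.E, ∃ x ∈ Set.Icc 0 (Γ.len e), φ.f e x ≠ 0

/-- The bottom of the spectrum of the Kirchhoff Laplacian, via the variational
(Rayleigh quotient) characterization. -/
def lambda0 (Γ : MetricGraph) : ℝ :=
  sInf {r : ℝ | ∃ φ : TestFun Γ, φ.Nonzero ∧ r = φ.energySq / φ.normSq}

end MetricGraph

/-- A weighted graph `(V, m, b)`: a connected, locally finite, simple combinatorial
graph with countably infinite vertex and edge sets, an edge weight `b` and a vertex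
weight `m`. -/
structure WeightedGraph : Type 1 where
  V : Type
  E : Type
  countV : Countable V
  infV : Infinite V
  countE : Countable E
  infE : Infinite E
  ends : E → V × V
  no_loops : ∀ e, (ends e).1 ≠ (ends e).2
  no_multi : Function.Injective fun e => Sym2.mk (ends e)
  locfin : ∀ v, {e | (ends e).1 = v ∨ (ends e).2 = v}.Finite
  conn : (graphOf ends).Connected
  b : E → ℝ
  b_pos : ∀ e, 0 < b e
  m : V → ℝ
  m_pos : ∀ v, 0 < m v

namespace WeightedGraph

/-- An edge weight `d` is intrinsic if `Σ_{e ∈ E_v} d(e)² b(e) ≤ m(v)` for all `v`. -/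
def Intrinsic (Γ : WeightedGraph) (d : Γ.E → ℝ) : Prop :=
  ∀ v, ∑ e ∈ (Γ.locfin v).toFinset, d e ^ 2 * Γ.b e ≤ Γ.m v

/-- The boundary edges of a vertex set: edges with exactly one endpoint in `X`. -/
def Eb (Γ : WeightedGraph) (X : Set Γ.V) : Set Γ.E :=
  {e | Xor' ((Γ.ends e).1 ∈ X) ((Γ.ends e).2 ∈ X)}

/-- The discrete isoperimetric constant `α_d(U)` with respect to the weight `d`. -/
def alphaD (Γ : WeightedGraph) (d : Γ.E → ℝ) (U : Set Γ.V) : ℝ :=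
  sInf {r : ℝ | ∃ X : Finset Γ.V, ↑X ⊆ U ∧ X.Nonempty ∧
    r = (∑ᶠ e ∈ Γ.Eb ↑X, d e * Γ.b e) / ∑ v ∈ X, Γ.m v}

/-- The discrete isoperimetric constant at infinity, in `[0,∞]`. -/
def alphaDEssEnn (Γ : WeightedGraph) (d : Γ.E → ℝ) : ℝ≥0∞ :=
  ⨆ X : Finset Γ.V, ENNReal.ofReal (Γ.alphaD d (↑X : Set Γ.V)ᶜ)

/-- The energy form `Q(u) = Σ_e b(e) (u(e_i) − u(e_0))²`. -/
def Q (Γ : WeightedGraph) (u : Γ.V → ℝ) : ℝ :=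
  ∑ᶠ e : Γ.E, Γ.b e * (u (Γ.ends e).2 - u (Γ.ends e).1) ^ 2

/-- The squared norm `Σ_v m(v) u(v)²`. -/
def normSqD (Γ : WeightedGraph) (u : Γ.V → ℝ) : ℝ :=
  ∑ᶠ v : Γ.V, Γ.m v * u v ^ 2

/-- The bottom of the spectrum of the Friedrichs extension of the weighted Laplacian,
via the variational characterization over finitely supported functions. -/
def lambda0 (Γ : WeightedGraph) : ℝ :=
  sInf {r : ℝ | ∃ u : Γ.V → ℝ, (Function.support u).Finite ∧ u ≠ 0 ∧
    r = Γ.Q u / Γ.normSqD u}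

/-- The bottom of the essential spectrum of the Friedrichs extension, via Glazman's
decomposition principle, in `[0,∞]`. -/
def lambda0EssEnn (Γ : WeightedGraph) : ℝ≥0∞ :=
  ⨆ X : Finset Γ.V, ⨅ (u : Γ.V → ℝ)
    (_ : (Function.support u).Finite ∧ u ≠ 0 ∧ ∀ v ∈ X, u v = 0),
      ENNReal.ofReal (Γ.Q u / Γ.normSqD u)

end WeightedGraph

end

/-!
Fix a finite subgraph `F` and put `s = ℓ_*/2`. The test function is `1` on `F`, `0` off `F`,
and on each edge of `F` it rises from `0` like `sin (π t / (2 s))` over a segment of length `s`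
at every endpoint lying on the boundary of `F`. Such a ramp costs energy `π² / (8 s)`, so the
energy is `deg(∂F) · π² / (4 ℓ_*)`; since every edge has length at least `2 s`, the ramps lose
at most half of each edge, so `‖f‖² ≥ mes(F) / 2`. Hence `λ₀ ≤ π² deg(∂F) / (2 ℓ_* mes(F))`
for every `F`, and taking the infimum over `F` gives the claim.
-/

noncomputable section

open Real intervalIntegral

def sineRamp (s t : ℝ) : ℝ := sin (π / (2 * s) * min t s)

def sineRampDeriv (s t : ℝ) : ℝ := π / (2 * s) * cos (π / (2 * s) * min t s)

section SineRamp

variable {s : ℝ}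

theorem continuous_sineRamp (s : ℝ) : Continuous (sineRamp s) := by
  unfold sineRamp; fun_prop

theorem continuous_sineRampDeriv (s : ℝ) : Continuous (sineRampDeriv s) := by
  unfold sineRampDeriv; fun_prop

theorem sineRamp_zero (hs : 0 < s) : sineRamp s 0 = 0 := by
  simp [sineRamp, min_eq_left hs.le]

theorem pi_div_two_mul_self (hs : 0 < s) : π / (2 * s) * s = π / 2 := by
  field_simp

theorem sineRamp_of_le {t : ℝ} (hs : 0 < s) (ht : s ≤ t) : sineRamp s t = 1 := by
  rw [sineRamp, min_eq_right ht, pi_div_two_mul_self hs, sin_pi_div_two]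

theorem sineRampDeriv_of_le {t : ℝ} (hs : 0 < s) (ht : s ≤ t) : sineRampDeriv s t = 0 := by
  rw [sineRampDeriv, min_eq_right ht, pi_div_two_mul_self hs, cos_pi_div_two, mul_zero]

theorem hasDerivAt_sineRamp (hs : 0 < s) (t : ℝ) :
    HasDerivAt (sineRamp s) (sineRampDeriv s t) t := by
  have hsin : HasDerivAt (fun u => sin (π / (2 * s) * u))
      (π / (2 * s) * cos (π / (2 * s) * t)) t := by
    simpa [mul_comm] using ((hasDerivAt_id' t).const_mul (π / (2 * s))).sin
  rcases lt_trichotomy t s with hts | rfl | hst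
  · refine (hsin.congr_of_eventuallyEq ?_).congr_deriv
      (by rw [sineRampDeriv, min_eq_left hts.le])
    filter_upwards [Iio_mem_nhds hts] with u hu
    rw [sineRamp, min_eq_left hu.le]
  · -- the sine branch reaches its maximum at `t`, where it meets the constant branch flatly
    have hleft : HasDerivWithinAt (sineRamp t) 0 (Set.Iic t) t := by
      rw [pi_div_two_mul_self hs, cos_pi_div_two, mul_zero] at hsin
      exact hsin.hasDerivWithinAt.congr (fun u hu => by rw [sineRamp, min_eq_left hu])
        (by rw [sineRamp, min_self])
    have hright : HasDerivWithinAt (sineRamp t) 0 (Set.Ici t) t :=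
      (hasDerivWithinAt_const t _ (1 : ℝ)).congr (fun u hu => sineRamp_of_le hs hu)
        (sineRamp_of_le hs le_rfl)
    have := hleft.union hright
    rwa [Set.Iic_union_Ici, hasDerivWithinAt_univ, ← sineRampDeriv_of_le hs le_rfl] at this
  · rw [sineRampDeriv_of_le hs hst.le]
    refine (hasDerivAt_const t (1 : ℝ)).congr_of_eventuallyEq ?_
    filter_upwards [Ioi_mem_nhds hst] with u hu
    exact sineRamp_of_le hs hu.le

theorem integral_sineRamp_sq (hs : 0 < s) : ∫ t in (0 : ℝ)..s, sineRamp s t ^ 2 = s / 2 := by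
  have hc : π / (2 * s) ≠ 0 := by positivity
  rw [integral_congr (g := fun t => sin (π / (2 * s) * t) ^ 2) fun t ht => by
      rw [Set.uIcc_of_le hs.le] at ht; rw [sineRamp, min_eq_left ht.2],
    integral_comp_mul_left (fun u => sin u ^ 2) hc, mul_zero, pi_div_two_mul_self hs,
    integral_sin_sq]
  simp only [inv_div, sin_zero, cos_zero, mul_one, sin_pi_div_two, cos_pi_div_two, mul_zero,
    sub_self, zero_add, sub_zero, smul_eq_mul]
  field_simp

theorem integral_sineRampDeriv_sq (hs : 0 < s) :
    ∫ t in (0 : ℝ)..s, sineRampDeriv s t ^ 2 = π ^ 2 / (8 * s) := by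
  have hc : π / (2 * s) ≠ 0 := by positivity
  rw [integral_congr (g := fun t => (π / (2 * s)) ^ 2 * cos (π / (2 * s) * t) ^ 2) fun t ht => by
      rw [Set.uIcc_of_le hs.le] at ht; rw [sineRampDeriv, min_eq_left ht.2, mul_pow],
    intervalIntegral.integral_const_mul, integral_comp_mul_left (fun u => cos u ^ 2) hc, mul_zero,
    pi_div_two_mul_self hs, integral_cos_sq]
  simp only [inv_div, sin_zero, cos_zero, mul_one, sin_pi_div_two, cos_pi_div_two, mul_zero,
    sub_self, zero_add, sub_zero, smul_eq_mul]
  field_simp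
  ring

end SineRamp

theorem integral_eq_of_eqOn_ends {g a b : ℝ → ℝ} {s L c : ℝ} (hs : 0 ≤ s) (hL : 2 * s ≤ L)
    (hg : Continuous g) (ha : ∀ x ∈ Set.Icc 0 s, g x = a x)
    (hc : ∀ x ∈ Set.Icc s (L - s), g x = c) (hb : ∀ x ∈ Set.Icc (L - s) L, g x = b (L - x)) :
    ∫ x in (0 : ℝ)..L, g x =
      (∫ x in (0 : ℝ)..s, a x) + c * (L - 2 * s) + ∫ x in (0 : ℝ)..s, b x := by
  have hint : ∀ u v : ℝ, IntervalIntegrable g volume u v := hg.intervalIntegrable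
  rw [← integral_add_adjacent_intervals (hint 0 (L - s)) (hint (L - s) L),
    ← integral_add_adjacent_intervals (hint 0 s) (hint s (L - s)),
    integral_congr (g := a) fun x hx => ha x (by rwa [Set.uIcc_of_le hs] at hx),
    integral_congr (g := fun _ => c)
      fun x hx => hc x (by rwa [Set.uIcc_of_le (by linarith)] at hx),
    integral_congr (g := fun x => b (L - x))
      fun x hx => hb x (by rwa [Set.uIcc_of_le (by linarith)] at hx),
    integral_comp_sub_left b L, intervalIntegral.integral_const, sub_self, sub_sub_cancel,
    smul_eq_mul]
  ring

def endRamp (p : Prop) (s t : ℝ) : ℝ := if p then sineRamp s t else 1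

def endRampDeriv (p : Prop) (s t : ℝ) : ℝ := if p then sineRampDeriv s t else 0

section EndRamp

variable (p : Prop) {s : ℝ}

theorem continuous_endRamp (s : ℝ) : Continuous (endRamp p s) := by
  unfold endRamp; split_ifs
  exacts [continuous_sineRamp s, continuous_const]

theorem continuous_endRampDeriv (s : ℝ) : Continuous (endRampDeriv p s) := by
  unfold endRampDeriv; split_ifs
  exacts [continuous_sineRampDeriv s, continuous_const]

theorem endRamp_zero (hs : 0 < s) : endRamp p s 0 = if p then 0 else 1 := by
  simp only [endRamp, sineRamp_zero hs]

variable {p} in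
theorem endRamp_of_le {t : ℝ} (hs : 0 < s) (ht : s ≤ t) : endRamp p s t = 1 := by
  simp only [endRamp, sineRamp_of_le hs ht, ite_self]

variable {p} in
theorem endRampDeriv_of_le {t : ℝ} (hs : 0 < s) (ht : s ≤ t) : endRampDeriv p s t = 0 := by
  simp only [endRampDeriv, sineRampDeriv_of_le hs ht, ite_self]

theorem hasDerivAt_endRamp (hs : 0 < s) (t : ℝ) :
    HasDerivAt (endRamp p s) (endRampDeriv p s t) t := by
  unfold endRamp endRampDeriv; split_ifs
  exacts [hasDerivAt_sineRamp hs t, hasDerivAt_const t 1]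

theorem integral_endRamp_sq (hs : 0 < s) :
    ∫ t in (0 : ℝ)..s, endRamp p s t ^ 2 = if p then s / 2 else s := by
  unfold endRamp; split_ifs
  · exact integral_sineRamp_sq hs
  · simp

theorem integral_endRampDeriv_sq (hs : 0 < s) :
    ∫ t in (0 : ℝ)..s, endRampDeriv p s t ^ 2 = if p then π ^ 2 / (8 * s) else 0 := by
  unfold endRampDeriv; split_ifs
  · exact integral_sineRampDeriv_sq hs
  · simp

end EndRamp

def edgeCutoff (p q : Prop) (s L x : ℝ) : ℝ := endRamp p s x * endRamp q s (L - x)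

def edgeCutoffDeriv (p q : Prop) (s L x : ℝ) : ℝ :=
  endRampDeriv p s x * endRamp q s (L - x) - endRamp p s x * endRampDeriv q s (L - x)

section EdgeCutoff

variable (p q : Prop) {s : ℝ} (L : ℝ)

theorem continuous_edgeCutoff (s : ℝ) : Continuous (edgeCutoff p q s L) := by
  unfold edgeCutoff
  have := continuous_endRamp p s; have := continuous_endRamp q s
  fun_prop

theorem continuous_edgeCutoffDeriv (s : ℝ) : Continuous (edgeCutoffDeriv p q s L) := by
  unfold edgeCutoffDeriv
  have := continuous_endRamp p s; have := continuous_endRamp q s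
  have := continuous_endRampDeriv p s; have := continuous_endRampDeriv q s
  fun_prop

theorem hasDerivAt_edgeCutoff (hs : 0 < s) (x : ℝ) :
    HasDerivAt (edgeCutoff p q s L) (edgeCutoffDeriv p q s L x) x := by
  have hq : HasDerivAt (fun y => endRamp q s (L - y)) (-endRampDeriv q s (L - x)) x := by
    simpa using (hasDerivAt_endRamp q hs (L - x)).comp_const_sub L x
  rw [edgeCutoffDeriv]
  exact ((hasDerivAt_endRamp p hs x).mul hq).congr_deriv (by ring)

theorem edgeCutoff_zero (hs : 0 < s) (hL : 2 * s ≤ L) :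
    edgeCutoff p q s L 0 = if p then 0 else 1 := by
  rw [edgeCutoff, endRamp_zero p hs, sub_zero, endRamp_of_le hs (by linarith), mul_one]

theorem edgeCutoff_len (hs : 0 < s) (hL : 2 * s ≤ L) :
    edgeCutoff p q s L L = if q then 0 else 1 := by
  rw [edgeCutoff, sub_self, endRamp_zero q hs, endRamp_of_le hs (by linarith), one_mul]

theorem edgeCutoff_self (hs : 0 < s) (hL : 2 * s ≤ L) : edgeCutoff p q s L s = 1 := by
  rw [edgeCutoff, endRamp_of_le hs le_rfl, endRamp_of_le hs (by linarith), mul_one]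

theorem half_le_integral_edgeCutoff_sq (hs : 0 < s) (hL : 2 * s ≤ L) :
    L / 2 ≤ ∫ x in (0 : ℝ)..L, edgeCutoff p q s L x ^ 2 := by
  rw [integral_eq_of_eqOn_ends (g := fun x => edgeCutoff p q s L x ^ 2)
      (a := fun x => endRamp p s x ^ 2) (b := fun x => endRamp q s x ^ 2) (c := 1) hs.le hL
      ((continuous_edgeCutoff p q L s).pow 2)
      (fun x hx => by
        rw [edgeCutoff, endRamp_of_le (t := L - x) hs (by linarith [hx.2]), mul_one])
      (fun x hx => by
        rw [edgeCutoff, endRamp_of_le hs hx.1, endRamp_of_le (t := L - x) hs (by linarith [hx.2])]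
        norm_num)
      (fun x hx => by rw [edgeCutoff, endRamp_of_le (t := x) hs (by linarith [hx.1]), one_mul]),
    integral_endRamp_sq p hs, integral_endRamp_sq q hs]
  split_ifs <;> linarith

theorem integral_edgeCutoffDeriv_sq (hs : 0 < s) (hL : 2 * s ≤ L) :
    ∫ x in (0 : ℝ)..L, edgeCutoffDeriv p q s L x ^ 2 =
      ((if p then 1 else 0) + (if q then 1 else 0)) * (π ^ 2 / (8 * s)) := by
  rw [integral_eq_of_eqOn_ends (g := fun x => edgeCutoffDeriv p q s L x ^ 2)
      (a := fun x => endRampDeriv p s x ^ 2) (b := fun x => endRampDeriv q s x ^ 2) (c := 0)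
      hs.le hL ((continuous_edgeCutoffDeriv p q L s).pow 2)
      (fun x hx => by
        have hx' : s ≤ L - x := by linarith [hx.2]
        rw [edgeCutoffDeriv, endRamp_of_le hs hx', endRampDeriv_of_le hs hx']; ring)
      (fun x hx => by
        have hx' : s ≤ L - x := by linarith [hx.2]
        rw [edgeCutoffDeriv, endRampDeriv_of_le hs hx.1, endRampDeriv_of_le hs hx']; ring)
      (fun x hx => by
        have hx' : s ≤ x := by linarith [hx.1]
        rw [edgeCutoffDeriv, endRamp_of_le hs hx', endRampDeriv_of_le hs hx']; ring),
    integral_endRampDeriv_sq p hs, integral_endRampDeriv_sq q hs]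
  split_ifs <;> ring

end EdgeCutoff

theorem piecewiseC1_of_hasDerivAt {f f' : ℝ → ℝ} {L : ℝ} (hL : 0 < L)
    (hf : ∀ t, HasDerivAt f (f' t) t) (hf' : Continuous f') : PiecewiseC1 f L := by
  refine ⟨fun t _ => (hf t).continuousAt.continuousWithinAt, 1, ![0, L], rfl, rfl, ?_,
    fun _ => ⟨f', hf'.continuousOn, fun t _ => (hf t).hasDerivWithinAt⟩⟩
  intro i j hij
  fin_cases i <;> fin_cases j <;> simp_all

namespace MetricGraph

variable {Γ : MetricGraph}

theorem ellInf_le_len (e : Γ.E) : Γ.ellInf ≤ Γ.len e :=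
  csInf_le ⟨0, by rintro _ ⟨e', rfl⟩; exact (Γ.len_pos e').le⟩ ⟨e, rfl⟩

theorem isFinSubgraph_singleton (e : Γ.E) : Γ.IsFinSubgraph {e} := by
  have hverts : ∀ x, x ∈ Γ.vertsOf {e} ↔ x = (Γ.ends e).1 ∨ x = (Γ.ends e).2 := by
    intro x; simp [vertsOf]
  have hu := (hverts (Γ.ends e).1).2 (Or.inl rfl)
  have hw := (hverts (Γ.ends e).2).2 (Or.inr rfl)
  have hadj : ((SimpleGraph.fromRel fun u v => ∃ e' ∈ ({e} : Finset Γ.E), Γ.ends e' = (u, v)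
      ).induce (Γ.vertsOf {e} : Set Γ.V)).Adj ⟨_, hu⟩ ⟨_, hw⟩ := by
    rw [SimpleGraph.comap_adj, SimpleGraph.fromRel_adj]
    exact ⟨Γ.no_loops e, Or.inl ⟨e, Finset.mem_singleton_self e, rfl⟩⟩
  have : Nonempty (Γ.vertsOf {e} : Set Γ.V) := ⟨⟨_, hu⟩⟩
  refine ⟨Finset.singleton_nonempty e, ⟨?_⟩⟩
  rintro ⟨a, ha⟩ ⟨b, hb⟩
  rcases (hverts a).1 ha with rfl | rfl <;> rcases (hverts b).1 hb with rfl | rfl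
  exacts [.rfl, hadj.reachable, hadj.symm.reachable, .rfl]

theorem ends_mem_vertsOf {F : Finset Γ.E} {e : Γ.E} (he : e ∈ F) :
    (Γ.ends e).1 ∈ Γ.vertsOf F ∧ (Γ.ends e).2 ∈ Γ.vertsOf F :=
  ⟨Finset.mem_union_left _ (Finset.mem_image_of_mem _ he),
    Finset.mem_union_right _ (Finset.mem_image_of_mem _ he)⟩

theorem mem_of_mem_star_of_notMem_bdry {F : Finset Γ.E} {v : Γ.V} {e : Γ.E}
    (hv : v ∈ Γ.vertsOf F) (hvb : v ∉ Γ.bdry F) (he : e ∈ Γ.star v) : e ∈ F := by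
  have hsub : F.filter (fun e => (Γ.ends e).1 = v ∨ (Γ.ends e).2 = v) ⊆ (Γ.locfin v).toFinset :=
    fun x hx => (Set.Finite.mem_toFinset _).2 (Finset.mem_filter.1 hx).2
  have hdeg : Γ.degree v ≤ Γ.degIn F v := not_lt.1 fun hlt => hvb (Finset.mem_filter.2 ⟨hv, hlt⟩)
  have hmem : e ∈ (Γ.locfin v).toFinset := (Set.Finite.mem_toFinset _).2 he
  rw [← Finset.eq_of_subset_of_card_le hsub hdeg] at hmem
  exact (Finset.mem_filter.1 hmem).1

theorem degIn_eq_sum (F : Finset Γ.E) (v : Γ.V) :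
    (Γ.degIn F v : ℝ) =
      ∑ e ∈ F, ((if (Γ.ends e).1 = v then 1 else 0) + (if (Γ.ends e).2 = v then 1 else 0)) := by
  rw [degIn, Finset.card_filter, Nat.cast_sum]
  refine Finset.sum_congr rfl fun e _ => ?_
  by_cases h₁ : (Γ.ends e).1 = v <;> by_cases h₂ : (Γ.ends e).2 = v
  · exact absurd (h₁.trans h₂.symm) (Γ.no_loops e)
  all_goals simp [h₁, h₂]

theorem degBdry_eq_sum (F : Finset Γ.E) :
    Γ.degBdry F = ∑ e ∈ F, ((if (Γ.ends e).1 ∈ Γ.bdry F then 1 else 0) +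
      (if (Γ.ends e).2 ∈ Γ.bdry F then 1 else 0)) := by
  simp only [degBdry, degIn_eq_sum, Finset.sum_comm (s := Γ.bdry F), Finset.sum_add_distrib,
    Finset.sum_ite_eq]

namespace TestFun

def ofHasDerivAt (f f' : Γ.E → ℝ → ℝ) (u : Γ.V → ℝ) (F : Finset Γ.E)
    (hf : ∀ e t, HasDerivAt (f e) (f' e t) t) (hf' : ∀ e, Continuous (f' e))
    (hstart : ∀ e, f e 0 = u (Γ.ends e).1) (hend : ∀ e, f e (Γ.len e) = u (Γ.ends e).2)
    (hsupp : ∀ e ∉ F, f e = 0) : Γ.TestFun where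
  f := f
  piecewise e := piecewiseC1_of_hasDerivAt (Γ.len_pos e) (hf e) (hf' e)
  vertexCont e e' v he he' := by
    have hval : ∀ e ∈ Γ.star v, Γ.endVal f e v = u v := by
      rintro e (h | h) <;> unfold endVal
      · rw [if_pos h, hstart, h]
      · split_ifs with h'
        · rw [hstart, h']
        · rw [hend, h]
    rw [hval e he, hval e' he']
  finSupp := F.finite_toSet.subset fun e ⟨x, _, hx⟩ =>
    by_contra fun he => hx (by simp [hsupp e he])

variable (φ : Γ.TestFun) {F : Finset Γ.E}

theorem normSq_eq_sum (hF : ∀ e ∉ F, φ.f e = 0) :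
    φ.normSq = ∑ e ∈ F, ∫ x in (0 : ℝ)..Γ.len e, φ.f e x ^ 2 :=
  finsum_eq_sum_of_support_subset _ fun e he => by_contra fun heF => he (by simp [hF e heF])

theorem energySq_eq_sum (hF : ∀ e ∉ F, φ.f e = 0) :
    φ.energySq = ∑ e ∈ F, ∫ x in (0 : ℝ)..Γ.len e, deriv (φ.f e) x ^ 2 :=
  finsum_eq_sum_of_support_subset _ fun e he => by_contra fun heF => he (by simp [hF e heF])

theorem normSq_nonneg : 0 ≤ φ.normSq :=
  finsum_nonneg fun e => integral_nonneg (Γ.len_pos e).le fun _ _ => sq_nonneg _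

theorem energySq_nonneg : 0 ≤ φ.energySq :=
  finsum_nonneg fun e => integral_nonneg (Γ.len_pos e).le fun _ _ => sq_nonneg _

end TestFun

theorem lambda0_le {φ : Γ.TestFun} (hφ : φ.Nonzero) : Γ.lambda0 ≤ φ.energySq / φ.normSq :=
  csInf_le ⟨0, by rintro _ ⟨ψ, -, rfl⟩; exact div_nonneg ψ.energySq_nonneg ψ.normSq_nonneg⟩
    ⟨φ, hφ, rfl⟩

variable (Γ)

def cutoff (s : ℝ) (F : Finset Γ.E) (e : Γ.E) : ℝ → ℝ :=
  if e ∈ F then edgeCutoff ((Γ.ends e).1 ∈ Γ.bdry F) ((Γ.ends e).2 ∈ Γ.bdry F) s (Γ.len e) else 0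

def cutoffDeriv (s : ℝ) (F : Finset Γ.E) (e : Γ.E) : ℝ → ℝ :=
  if e ∈ F then edgeCutoffDeriv ((Γ.ends e).1 ∈ Γ.bdry F) ((Γ.ends e).2 ∈ Γ.bdry F) s (Γ.len e)
  else 0

def innerIndicator (F : Finset Γ.E) (v : Γ.V) : ℝ := if v ∈ Γ.vertsOf F \ Γ.bdry F then 1 else 0

variable {Γ} {s : ℝ} (hs : 0 < s) (hlen : ∀ e, 2 * s ≤ Γ.len e) (F : Finset Γ.E)

theorem continuous_cutoffDeriv (e : Γ.E) : Continuous (Γ.cutoffDeriv s F e) := by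
  unfold cutoffDeriv; split_ifs
  exacts [continuous_edgeCutoffDeriv _ _ _ s, continuous_const]

theorem innerIndicator_eq_zero_of_notMem {e : Γ.E} {v : Γ.V} (he : e ∉ F) (hv : e ∈ Γ.star v) :
    Γ.innerIndicator F v = 0 :=
  if_neg fun hvF => by
    rw [Finset.mem_sdiff] at hvF
    exact he (mem_of_mem_star_of_notMem_bdry hvF.1 hvF.2 hv)

include hs

theorem hasDerivAt_cutoff (e : Γ.E) (t : ℝ) :
    HasDerivAt (Γ.cutoff s F e) (Γ.cutoffDeriv s F e t) t := by
  unfold cutoff cutoffDeriv; split_ifs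
  exacts [hasDerivAt_edgeCutoff _ _ _ hs t, hasDerivAt_const t 0]

include hlen

theorem cutoff_zero (e : Γ.E) : Γ.cutoff s F e 0 = Γ.innerIndicator F (Γ.ends e).1 := by
  by_cases he : e ∈ F
  · simp only [cutoff, innerIndicator, if_pos he, edgeCutoff_zero _ _ _ hs (hlen e),
      Finset.mem_sdiff, (ends_mem_vertsOf he).1, true_and]
    split_ifs <;> rfl
  · rw [cutoff, if_neg he, innerIndicator_eq_zero_of_notMem F he (Or.inl rfl), Pi.zero_apply]

theorem cutoff_len (e : Γ.E) : Γ.cutoff s F e (Γ.len e) = Γ.innerIndicator F (Γ.ends e).2 := by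
  by_cases he : e ∈ F
  · simp only [cutoff, innerIndicator, if_pos he, edgeCutoff_len _ _ _ hs (hlen e),
      Finset.mem_sdiff, (ends_mem_vertsOf he).2, true_and]
    split_ifs <;> rfl
  · rw [cutoff, if_neg he, innerIndicator_eq_zero_of_notMem F he (Or.inr rfl), Pi.zero_apply]

def cutoffTestFun : Γ.TestFun :=
  .ofHasDerivAt (Γ.cutoff s F) (Γ.cutoffDeriv s F) (Γ.innerIndicator F) F
    (hasDerivAt_cutoff hs F) (continuous_cutoffDeriv F) (cutoff_zero hs hlen F)
    (cutoff_len hs hlen F) fun _ he => if_neg he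

theorem cutoffTestFun_nonzero (hF : F.Nonempty) : (cutoffTestFun hs hlen F).Nonzero := by
  obtain ⟨e, he⟩ := hF
  refine ⟨e, s, ⟨hs.le, by linarith [hlen e]⟩, ?_⟩
  show Γ.cutoff s F e s ≠ 0
  rw [cutoff, if_pos he, edgeCutoff_self _ _ _ hs (hlen e)]
  exact one_ne_zero

theorem energySq_cutoffTestFun :
    (cutoffTestFun hs hlen F).energySq = Γ.degBdry F * (π ^ 2 / (8 * s)) := by
  rw [TestFun.energySq_eq_sum _ fun _ he => if_neg he, degBdry_eq_sum, Finset.sum_mul]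
  refine Finset.sum_congr rfl fun e he => ?_
  have hderiv : deriv (Γ.cutoff s F e) = Γ.cutoffDeriv s F e :=
    funext fun t => (hasDerivAt_cutoff hs F e t).deriv
  show ∫ x in (0 : ℝ)..Γ.len e, deriv (Γ.cutoff s F e) x ^ 2 = _
  rw [hderiv, cutoffDeriv, if_pos he, integral_edgeCutoffDeriv_sq _ _ _ hs (hlen e)]
  -- the two sides differ only in the `Decidable` instances of their `if`s
  congr

theorem mes_div_two_le_normSq_cutoffTestFun :
    Γ.mes F / 2 ≤ (cutoffTestFun hs hlen F).normSq := by
  rw [TestFun.normSq_eq_sum _ fun _ he => if_neg he, mes, Finset.sum_div]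
  refine Finset.sum_le_sum fun e he => ?_
  show _ ≤ ∫ x in (0 : ℝ)..Γ.len e, Γ.cutoff s F e x ^ 2
  rw [cutoff, if_pos he]
  exact half_le_integral_edgeCutoff_sq _ _ _ hs (hlen e)

omit hs hlen

theorem lambda0_le_degBdry_div_mes (hℓ : 0 < Γ.ellInf) (hF : F.Nonempty) :
    Γ.lambda0 ≤ π ^ 2 / (2 * Γ.ellInf) * (Γ.degBdry F / Γ.mes F) := by
  have hs : 0 < Γ.ellInf / 2 := half_pos hℓ
  have hlen : ∀ e, 2 * (Γ.ellInf / 2) ≤ Γ.len e := fun e => by linarith [ellInf_le_len e]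
  set φ := cutoffTestFun hs hlen F
  have hmes : 0 < Γ.mes F := Finset.sum_pos (fun e _ => Γ.len_pos e) hF
  calc Γ.lambda0 ≤ φ.energySq / φ.normSq := lambda0_le (cutoffTestFun_nonzero hs hlen F hF)
    _ ≤ φ.energySq / (Γ.mes F / 2) :=
      div_le_div_of_nonneg_left φ.energySq_nonneg (by positivity)
        (mes_div_two_le_normSq_cutoffTestFun hs hlen F)
    _ = π ^ 2 / (2 * Γ.ellInf) * (Γ.degBdry F / Γ.mes F) := by
      rw [energySq_cutoffTestFun]
      field_simp
      ring

end MetricGraph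

end

/-- **Lemma 5.1 (Buser-type estimate).** If `ℓ_*(G) = inf_e |e| > 0`, then
`λ₀(H) ≤ π²·α(G) / (2 ℓ_*(G))`. -/
theorem buser_estimate (Γ : MetricGraph) (h : 0 < Γ.ellInf) :
    Γ.lambda0 ≤ Real.pi ^ 2 * Γ.alpha / (2 * Γ.ellInf) := by
  have hc : 0 < Real.pi ^ 2 / (2 * Γ.ellInf) := by positivity
  obtain ⟨e⟩ : Nonempty Γ.E := Γ.infE.nonempty
  have hα : Γ.lambda0 / (Real.pi ^ 2 / (2 * Γ.ellInf)) ≤ Γ.alpha := by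
    refine le_csInf ⟨_, {e}, MetricGraph.isFinSubgraph_singleton e, rfl⟩ ?_
    rintro _ ⟨F, hF, rfl⟩
    rw [div_le_iff₀' hc]
    exact MetricGraph.lambda0_le_degBdry_div_mes F h hF.1
  rw [div_le_iff₀' hc] at hα
  exact hα.trans_eq (by ring)
end

section
/- (Lemma 4.1, first inequality) The metric and discrete isoperimetric constants satisfy α(G)/2 ≤ α_d(V), i.e. α(G) ≤ 2·α_d(V). -/
open scoped Classical ENNReal
open MeasureTheory

/-!
Split a finite vertex set `X` along the connected components of the graph it induces: no edge
joins two components, so `#E_b` and `m` are additive over the split and, by the mediant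
inequality, some connected `Y ⊆ X` has `#E_b(Y)/m(Y) ≤ #E_b(X)/m(X)`. The edges meeting `Y` form a
finite connected subgraph `F`. Each edge of `F` is counted at most twice in `m(Y)`, so
`m(Y) ≤ 2 mes(F)`; every boundary vertex of `F` lies outside `Y`, so its `F`-edges are boundary
edges of `Y`, each counted once, and `deg(∂F) ≤ #E_b(Y)`. Hence
`α(G) ≤ deg(∂F)/mes(F) ≤ 2 #E_b(Y)/m(Y)`.
-/

theorem SimpleGraph.exists_ssubset_of_not_connected_induce {V : Type*} (G : SimpleGraph V)
    {X : Finset V} (hX : X.Nonempty) (h : ¬ (G.induce (X : Set V)).Connected) :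
    ∃ A ⊂ X, A.Nonempty ∧ ∀ a ∈ A, ∀ b ∈ X \ A, ¬ G.Adj a b := by
  classical
  have : Nonempty (X : Set V) := ⟨⟨_, hX.choose_spec⟩⟩
  obtain ⟨u, w, huw⟩ : ∃ u w, ¬ (G.induce (X : Set V)).Reachable u w := by
    simpa [SimpleGraph.connected_iff, SimpleGraph.Preconnected, this] using h
  set A := X.filter fun x => ∃ hx : x ∈ X, (G.induce (X : Set V)).Reachable u ⟨x, hx⟩
  refine ⟨A, ?_, ⟨u, ?_⟩, ?_⟩
  · refine Finset.ssubset_iff_subset_ne.2 ⟨Finset.filter_subset _ _, fun hA => huw ?_⟩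
    have hwA : (w : V) ∈ A := by rw [hA]; exact w.2
    obtain ⟨-, _, hw⟩ := Finset.mem_filter.1 hwA
    exact hw
  · exact Finset.mem_filter.2 ⟨u.2, u.2, .rfl⟩
  · intro a ha b hb hab
    obtain ⟨hbX, hbA⟩ := Finset.mem_sdiff.1 hb
    obtain ⟨-, haX, hua⟩ := Finset.mem_filter.1 ha
    exact hbA (Finset.mem_filter.2 ⟨hbX, hbX,
      hua.trans (SimpleGraph.Adj.reachable (G := G.induce (X : Set V)) (u := ⟨a, haX⟩)
        (v := ⟨b, hbX⟩) hab)⟩)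

theorem div_le_add_div_add_or_div_le_add_div_add {α : Type*} [Field α] [LinearOrder α]
    [IsStrictOrderedRing α] (a b : α) {c d : α} (hc : 0 < c) (hd : 0 < d) :
    a / c ≤ (a + b) / (c + d) ∨ b / d ≤ (a + b) / (c + d) := by
  by_contra! h
  rw [div_lt_div_iff₀ (by positivity) hc, div_lt_div_iff₀ (by positivity) hd] at h
  linarith [h.1, h.2]

namespace MetricGraph

variable (Γ : MetricGraph)

theorem mem_locfin_toFinset {v : Γ.V} {e : Γ.E} : e ∈ (Γ.locfin v).toFinset ↔ e ∈ Γ.star v :=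
  Set.Finite.mem_toFinset _

theorem exists_mem_star_of_adj {u v : Γ.V} (h : Γ.graph.Adj u v) :
    ∃ e, e ∈ Γ.star u ∧ e ∈ Γ.star v := by
  obtain ⟨-, ⟨e, he⟩ | ⟨e, he⟩⟩ := (SimpleGraph.fromRel_adj _ u v).1 h
  · exact ⟨e, Or.inl (by rw [he]), Or.inr (by rw [he])⟩
  · exact ⟨e, Or.inr (by rw [he]), Or.inl (by rw [he])⟩

theorem exists_mem_star (v : Γ.V) : ∃ e, e ∈ Γ.star v := by
  have := Γ.infV
  obtain ⟨w, hw⟩ := Γ.conn.preconnected.exists_adj_of_nontrivial v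
  obtain ⟨e, he, -⟩ := Γ.exists_mem_star_of_adj hw
  exact ⟨e, he⟩

theorem mweight_pos (v : Γ.V) : 0 < Γ.mweight v := by
  obtain ⟨e, he⟩ := Γ.exists_mem_star v
  exact Finset.sum_pos (fun e _ => Γ.len_pos e) ⟨e, Γ.mem_locfin_toFinset.2 he⟩

theorem card_filter_mem_star_le_two (S : Finset Γ.V) (e : Γ.E) :
    (S.filter fun v => e ∈ Γ.star v).card ≤ 2 := by
  calc (S.filter fun v => e ∈ Γ.star v).card
      ≤ ({(Γ.ends e).1, (Γ.ends e).2} : Finset Γ.V).card := by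
        refine Finset.card_le_card fun v hv => ?_
        rcases (Finset.mem_filter.1 hv).2 with h | h <;> simp [h]
    _ ≤ 2 := Finset.card_le_two

theorem sum_sum_filter_mem_star_le (S : Finset Γ.V) (F : Finset Γ.E) {w : Γ.E → ℝ}
    (hw : ∀ e, 0 ≤ w e) :
    ∑ v ∈ S, ∑ e ∈ F.filter (· ∈ Γ.star v), w e ≤ 2 * ∑ e ∈ F, w e := by
  refine (Finset.sum_sum_bipartiteAbove_eq_sum_sum_bipartiteBelow (fun v e => e ∈ Γ.star v)
    (s := S) (t := F) fun _ e => w e).trans_le ?_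
  rw [Finset.mul_sum]
  refine Finset.sum_le_sum fun e _ => ?_
  rw [Finset.sum_const, nsmul_eq_mul]
  gcongr
  · exact hw e
  · exact_mod_cast Γ.card_filter_mem_star_le_two S e

theorem mem_Eb {X : Set Γ.V} {e : Γ.E} :
    e ∈ Γ.Eb X ↔ Xor ((Γ.ends e).1 ∈ X) ((Γ.ends e).2 ∈ X) :=
  Iff.rfl

noncomputable def incidentEdges (X : Finset Γ.V) : Finset Γ.E :=
  X.biUnion fun v => (Γ.locfin v).toFinset

theorem mem_incidentEdges {X : Finset Γ.V} {e : Γ.E} :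
    e ∈ Γ.incidentEdges X ↔ ∃ v ∈ X, e ∈ Γ.star v := by
  simp only [incidentEdges, Finset.mem_biUnion, mem_locfin_toFinset]

theorem Eb_subset_incidentEdges (X : Finset Γ.V) : Γ.Eb ↑X ⊆ ↑(Γ.incidentEdges X) := by
  rintro e (⟨h, -⟩ | ⟨h, -⟩)
  · exact Γ.mem_incidentEdges.2 ⟨_, h, Or.inl rfl⟩
  · exact Γ.mem_incidentEdges.2 ⟨_, h, Or.inr rfl⟩

theorem Eb_finite (X : Finset Γ.V) : (Γ.Eb ↑X).Finite :=
  (Γ.incidentEdges X).finite_toSet.subset (Γ.Eb_subset_incidentEdges X)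

theorem ncard_Eb_union {A B : Finset Γ.V} (hAB : Disjoint A B)
    (hadj : ∀ a ∈ A, ∀ b ∈ B, ¬ Γ.graph.Adj a b) :
    (Γ.Eb ↑(A ∪ B)).ncard = (Γ.Eb ↑A).ncard + (Γ.Eb ↑B).ncard := by
  have hends : ∀ e, ¬ ((Γ.ends e).1 ∈ A ∧ (Γ.ends e).2 ∈ B) ∧
      ¬ ((Γ.ends e).1 ∈ B ∧ (Γ.ends e).2 ∈ A) ∧
      ¬ ((Γ.ends e).1 ∈ A ∧ (Γ.ends e).1 ∈ B) ∧ ¬ ((Γ.ends e).2 ∈ A ∧ (Γ.ends e).2 ∈ B) := by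
    intro e
    have hG : Γ.graph.Adj (Γ.ends e).1 (Γ.ends e).2 :=
      (SimpleGraph.fromRel_adj _ _ _).2 ⟨Γ.no_loops e, Or.inl ⟨e, rfl⟩⟩
    exact ⟨fun h => hadj _ h.1 _ h.2 hG, fun h => hadj _ h.2 _ h.1 hG.symm,
      fun h => Finset.disjoint_left.1 hAB h.1 h.2, fun h => Finset.disjoint_left.1 hAB h.1 h.2⟩
  have hunion : Γ.Eb ↑(A ∪ B) = Γ.Eb ↑A ∪ Γ.Eb ↑B := by
    ext e
    obtain ⟨h1, h2, h3, h4⟩ := hends e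
    simp only [mem_Eb, Finset.coe_union, Set.mem_union, Finset.mem_coe, xor_iff_or_and_not_and]
    tauto
  have hdisj : Disjoint (Γ.Eb ↑A) (Γ.Eb ↑B) := by
    refine Set.disjoint_left.2 fun e heA heB => ?_
    obtain ⟨h1, h2, h3, h4⟩ := hends e
    simp only [mem_Eb, Finset.mem_coe, xor_iff_or_and_not_and] at heA heB
    tauto
  rw [hunion, Set.ncard_union_eq hdisj (Γ.Eb_finite A) (Γ.Eb_finite B)]

noncomputable def boundaryRatio (X : Finset Γ.V) : ℝ :=
  ((Γ.Eb ↑X).ncard : ℝ) / ∑ v ∈ X, Γ.mweight v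

theorem sum_mweight_pos {X : Finset Γ.V} (hX : X.Nonempty) : 0 < ∑ v ∈ X, Γ.mweight v :=
  Finset.sum_pos (fun v _ => Γ.mweight_pos v) hX

theorem boundaryRatio_union {A B : Finset Γ.V} (hAB : Disjoint A B)
    (hadj : ∀ a ∈ A, ∀ b ∈ B, ¬ Γ.graph.Adj a b) :
    Γ.boundaryRatio (A ∪ B) = (((Γ.Eb ↑A).ncard : ℝ) + (Γ.Eb ↑B).ncard) /
      (∑ v ∈ A, Γ.mweight v + ∑ v ∈ B, Γ.mweight v) := by
  rw [boundaryRatio, Γ.ncard_Eb_union hAB hadj, Finset.sum_union hAB, Nat.cast_add]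

theorem exists_connected_boundaryRatio_le {X : Finset Γ.V} (hX : X.Nonempty) :
    ∃ Y ⊆ X, (Γ.graph.induce (Y : Set Γ.V)).Connected ∧
      Γ.boundaryRatio Y ≤ Γ.boundaryRatio X := by
  induction X using Finset.strongInduction with
  | H X ih =>
  by_cases hconn : (Γ.graph.induce (X : Set Γ.V)).Connected
  · exact ⟨X, subset_rfl, hconn, le_rfl⟩
  obtain ⟨A, hAX, hA, hadj⟩ := Γ.graph.exists_ssubset_of_not_connected_induce hX hconn
  have hB : (X \ A).Nonempty := Finset.sdiff_nonempty.2 hAX.not_subset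
  have hsplit := Γ.boundaryRatio_union Finset.disjoint_sdiff hadj
  rw [Finset.union_sdiff_of_subset hAX.subset] at hsplit
  rcases div_le_add_div_add_or_div_le_add_div_add _ _ (Γ.sum_mweight_pos hA)
    (Γ.sum_mweight_pos hB) with h | h
  · obtain ⟨Y, hYA, hYc, hYr⟩ := ih A hAX hA
    exact ⟨Y, hYA.trans hAX.subset, hYc, hYr.trans (hsplit ▸ h)⟩
  · obtain ⟨Y, hYB, hYc, hYr⟩ := ih (X \ A) (Finset.sdiff_ssubset hAX.subset hA) hB
    exact ⟨Y, hYB.trans Finset.sdiff_subset, hYc, hYr.trans (hsplit ▸ h)⟩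

def spannedGraph (F : Finset Γ.E) : SimpleGraph Γ.V :=
  SimpleGraph.fromRel fun u v => ∃ e ∈ F, Γ.ends e = (u, v)

theorem subConn_iff {F : Finset Γ.E} :
    Γ.SubConn F ↔ ((Γ.spannedGraph F).induce (Γ.vertsOf F : Set Γ.V)).Connected :=
  Iff.rfl

theorem spannedGraph_adj_of_mem_star {F : Finset Γ.E} {e : Γ.E} (he : e ∈ F) {u v : Γ.V}
    (hu : e ∈ Γ.star u) (hv : e ∈ Γ.star v) (huv : u ≠ v) : (Γ.spannedGraph F).Adj u v := by
  refine (SimpleGraph.fromRel_adj _ u v).2 ⟨huv, ?_⟩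
  rcases hu with hu | hu <;> rcases hv with hv | hv
  · exact absurd (hu.symm.trans hv) huv
  · exact Or.inl ⟨e, he, Prod.ext hu hv⟩
  · exact Or.inr ⟨e, he, Prod.ext hv hu⟩
  · exact absurd (hu.symm.trans hv) huv

theorem mem_vertsOf {F : Finset Γ.E} {v : Γ.V} : v ∈ Γ.vertsOf F ↔ ∃ e ∈ F, e ∈ Γ.star v := by
  simp only [vertsOf, Finset.mem_union, Finset.mem_image, star]
  grind

theorem subset_vertsOf_incidentEdges (Y : Finset Γ.V) : Y ⊆ Γ.vertsOf (Γ.incidentEdges Y) :=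
  fun v hv =>
    have ⟨e, he⟩ := Γ.exists_mem_star v
    Γ.mem_vertsOf.2 ⟨e, Γ.mem_incidentEdges.2 ⟨v, hv, he⟩, he⟩

theorem subConn_incidentEdges {Y : Finset Γ.V} (hY : (Γ.graph.induce (Y : Set Γ.V)).Connected) :
    Γ.SubConn (Γ.incidentEdges Y) := by
  set F := Γ.incidentEdges Y
  set K := (Γ.spannedGraph F).induce (Γ.vertsOf F : Set Γ.V)
  have hYF := Γ.subset_vertsOf_incidentEdges Y
  let φ : Γ.graph.induce (Y : Set Γ.V) →g K :=
    { toFun := fun v => ⟨v, hYF v.2⟩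
      map_rel' := fun {u v} huv => by
        obtain ⟨e, hu, hv⟩ := Γ.exists_mem_star_of_adj huv
        exact Γ.spannedGraph_adj_of_mem_star (Γ.mem_incidentEdges.2 ⟨u, u.2, hu⟩) hu hv
          (SimpleGraph.Adj.ne (G := Γ.graph) huv) }
  have hreach : ∀ x, ∃ y, K.Reachable x (φ y) := by
    rintro ⟨x, hx⟩
    obtain ⟨e, he, hxe⟩ := Γ.mem_vertsOf.1 hx
    obtain ⟨y, hy, hye⟩ := Γ.mem_incidentEdges.1 he
    refine ⟨⟨y, hy⟩, ?_⟩
    by_cases hxy : x = y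
    · subst hxy
      rfl
    · exact SimpleGraph.Adj.reachable (G := K) (u := ⟨x, hx⟩) (v := φ ⟨y, hy⟩)
        (Γ.spannedGraph_adj_of_mem_star he hxe hye hxy)
  rw [subConn_iff, SimpleGraph.connected_iff]
  refine ⟨fun x x' => ?_, hY.nonempty.map φ⟩
  obtain ⟨y, hy⟩ := hreach x
  obtain ⟨y', hy'⟩ := hreach x'
  exact hy.trans (((hY.preconnected y y').map φ).trans hy'.symm)

theorem locfin_toFinset_eq_filter_incidentEdges {Y : Finset Γ.V} {v : Γ.V} (hv : v ∈ Y) :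
    (Γ.locfin v).toFinset = (Γ.incidentEdges Y).filter (· ∈ Γ.star v) := by
  ext e
  simp only [Finset.mem_filter, mem_locfin_toFinset, mem_incidentEdges]
  exact ⟨fun he => ⟨⟨v, hv, he⟩, he⟩, And.right⟩

theorem sum_mweight_le_two_mul_mes (Y : Finset Γ.V) :
    ∑ v ∈ Y, Γ.mweight v ≤ 2 * Γ.mes (Γ.incidentEdges Y) := by
  calc ∑ v ∈ Y, Γ.mweight v
      = ∑ v ∈ Y, ∑ e ∈ (Γ.incidentEdges Y).filter (· ∈ Γ.star v), Γ.len e :=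
        Finset.sum_congr rfl fun v hv => by
          rw [mweight, Γ.locfin_toFinset_eq_filter_incidentEdges hv]
    _ ≤ 2 * Γ.mes (Γ.incidentEdges Y) :=
        Γ.sum_sum_filter_mem_star_le Y _ fun e => (Γ.len_pos e).le

theorem degIn_eq_card_filter (F : Finset Γ.E) (v : Γ.V) :
    Γ.degIn F v = (F.filter (· ∈ Γ.star v)).card := by
  unfold degIn
  exact congrArg Finset.card (Finset.filter_congr fun _ _ => Iff.rfl)

theorem degIn_incidentEdges {Y : Finset Γ.V} {v : Γ.V} (hv : v ∈ Y) :
    Γ.degIn (Γ.incidentEdges Y) v = Γ.degree v := by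
  rw [degree, Γ.locfin_toFinset_eq_filter_incidentEdges hv, degIn_eq_card_filter]

theorem disjoint_bdry_incidentEdges (Y : Finset Γ.V) : Disjoint (Γ.bdry (Γ.incidentEdges Y)) Y :=
  Finset.disjoint_left.2 fun v hv hvY => by
    have := (Finset.mem_filter.1 hv).2
    rw [Γ.degIn_incidentEdges hvY] at this
    exact lt_irrefl _ this

theorem card_filter_mem_star_le_ite {Y S : Finset Γ.V} (hSY : Disjoint S Y) {e : Γ.E}
    (he : e ∈ Γ.incidentEdges Y) :
    (S.filter (e ∈ Γ.star ·)).card ≤ if e ∈ Γ.Eb ↑Y then 1 else 0 := by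
  obtain ⟨y, hy, hey⟩ := Γ.mem_incidentEdges.1 he
  have hout : ∀ v ∈ S.filter (e ∈ Γ.star ·), v ∉ Y ∧ e ∈ Γ.star v := fun v hv =>
    ⟨Finset.disjoint_left.1 hSY (Finset.mem_filter.1 hv).1, (Finset.mem_filter.1 hv).2⟩
  split_ifs with hEb
  · refine Finset.card_le_one.2 fun a ha b hb => ?_
    obtain ⟨haY, ha⟩ := hout a ha
    obtain ⟨hbY, hb⟩ := hout b hb
    rcases ha with rfl | rfl <;> rcases hb with hb | hb <;> rcases hey with rfl | rfl <;>
      simp_all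
  · refine Finset.card_eq_zero.2 (Finset.eq_empty_of_forall_notMem fun v hv => hEb ?_) |>.le
    obtain ⟨hvY, hv⟩ := hout v hv
    rw [mem_Eb, xor_iff_or_and_not_and]
    rcases hv with rfl | rfl <;> rcases hey with rfl | rfl <;> simp_all

theorem degBdry_incidentEdges_le (Y : Finset Γ.V) :
    Γ.degBdry (Γ.incidentEdges Y) ≤ (Γ.Eb ↑Y).ncard := by
  set F := Γ.incidentEdges Y
  have hEb : (F.filter (· ∈ Γ.Eb ↑Y)).card = (Γ.Eb ↑Y).ncard := by
    rw [← Set.ncard_coe_finset, Finset.coe_filter]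
    congr 1
    ext e
    exact ⟨And.right, fun he => ⟨Γ.Eb_subset_incidentEdges Y he, he⟩⟩
  have hcount : ∑ v ∈ Γ.bdry F, Γ.degIn F v ≤ (Γ.Eb ↑Y).ncard :=
    calc ∑ v ∈ Γ.bdry F, Γ.degIn F v
        = ∑ e ∈ F, ((Γ.bdry F).filter (e ∈ Γ.star ·)).card := by
          simp_rw [degIn_eq_card_filter]
          exact Finset.sum_card_bipartiteAbove_eq_sum_card_bipartiteBelow (fun v e => e ∈ Γ.star v)
      _ ≤ ∑ e ∈ F, if e ∈ Γ.Eb ↑Y then 1 else 0 :=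
          Finset.sum_le_sum fun e he =>
            Γ.card_filter_mem_star_le_ite (Γ.disjoint_bdry_incidentEdges Y) he
      _ = (Γ.Eb ↑Y).ncard := by rw [← Finset.card_filter, hEb]
  rw [degBdry]
  exact_mod_cast hcount

theorem alpha_le_degBdry_div_mes {F : Finset Γ.E} (hF : Γ.IsFinSubgraph F) :
    Γ.alpha ≤ Γ.degBdry F / Γ.mes F := by
  refine csInf_le ⟨0, ?_⟩ ⟨F, hF, rfl⟩
  rintro _ ⟨F', -, rfl⟩
  exact div_nonneg (Finset.sum_nonneg fun _ _ => Nat.cast_nonneg _)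
    (Finset.sum_nonneg fun e _ => (Γ.len_pos e).le)

theorem alpha_le_two_mul_boundaryRatio {Y : Finset Γ.V}
    (hY : (Γ.graph.induce (Y : Set Γ.V)).Connected) :
    Γ.alpha ≤ 2 * Γ.boundaryRatio Y := by
  obtain ⟨y⟩ := hY.nonempty
  have hF : Γ.IsFinSubgraph (Γ.incidentEdges Y) := by
    obtain ⟨e, he⟩ := Γ.exists_mem_star y
    exact ⟨⟨e, Γ.mem_incidentEdges.2 ⟨y, y.2, he⟩⟩, Γ.subConn_incidentEdges hY⟩
  calc Γ.alpha ≤ Γ.degBdry (Γ.incidentEdges Y) / Γ.mes (Γ.incidentEdges Y) :=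
        Γ.alpha_le_degBdry_div_mes hF
    _ ≤ (Γ.Eb ↑Y).ncard / ((∑ v ∈ Y, Γ.mweight v) / 2) :=
        div_le_div₀ (Nat.cast_nonneg _) (Γ.degBdry_incidentEdges_le Y)
          (half_pos (Γ.sum_mweight_pos ⟨y, y.2⟩))
          (by linarith [Γ.sum_mweight_le_two_mul_mes Y])
    _ = 2 * Γ.boundaryRatio Y := by rw [boundaryRatio, div_div_eq_mul_div, mul_comm, mul_div_assoc]

end MetricGraph

/-- **Lemma 4.1 (first inequality).** `α(G) ≤ 2·α_d(V)`. -/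
theorem alpha_le_two_mul_alphaD (Γ : MetricGraph) :
    Γ.alpha ≤ 2 * Γ.alphaD Set.univ := by
  have := Γ.infV
  obtain ⟨v⟩ := (inferInstance : Nonempty Γ.V)
  rw [← div_le_iff₀' two_pos]
  refine le_csInf ⟨_, {v}, Set.subset_univ _, Finset.singleton_nonempty v, rfl⟩ ?_
  rintro _ ⟨X, -, hX, rfl⟩
  obtain ⟨Y, -, hY, hYX⟩ := Γ.exists_connected_boundaryRatio_le hX
  rw [div_le_iff₀' two_pos]
  exact (Γ.alpha_le_two_mul_boundaryRatio hY).trans (by gcongr; exact hYX)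
end
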